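/- arXiv:1811.12046 — 3 statements merged into one kernel-verified Lean document; each statement's English description precedes it below -/
import Mathlib

section
/- Let f : ℝ → ℝ be continuous with compact support, let x ∈ ℝ, and let g(u) = 1/(i-u) + χ_{|u|>1}·(1/u). Then ∫_ℝ (f(x+εu) - f(x))·g(u) du → 0 as ε → 0⁺. -/
open MeasureTheory Complex Set Filter Topology

/-! Dominated convergence. For |u| > 1 the term 1/u cancels the 1/(-u) tail of 1/(i - u), so the
kernel is O(1/(1 + u²)) and hence integrable, while |f(x + εu) - f(x)| ≤ 2 sup |f| and tends to 0
pointwise by continuity. -/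

theorem tendsto_integral_sub_mul_of_integrable {μ : Measure ℝ} {f : ℝ → ℝ} (hf : Continuous f)
    {C : ℝ} (hC : ∀ y, |f y| ≤ C) {g : ℝ → ℂ} (hg : Integrable g μ) (x : ℝ) :
    Tendsto (fun ε : ℝ => ∫ u, ((f (x + ε * u) - f x : ℝ) : ℂ) * g u ∂μ) (𝓝 0) (𝓝 0) := by
  have hlim := tendsto_integral_filter_of_dominated_convergence (l := 𝓝 (0 : ℝ)) (μ := μ)
    (F := fun ε u => ((f (x + ε * u) - f x : ℝ) : ℂ) * g u) (fun u => 2 * C * ‖g u‖)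
    (Eventually.of_forall fun ε =>
      (Continuous.aestronglyMeasurable (by fun_prop)).mul hg.aestronglyMeasurable)
    (Eventually.of_forall fun ε => Eventually.of_forall fun u => by
      rw [norm_mul, norm_real, Real.norm_eq_abs]
      gcongr
      linarith [abs_sub (f (x + ε * u)) (f x), hC (x + ε * u), hC x])
    (hg.norm.const_mul _)
    (Eventually.of_forall fun u => by
      simpa using
        ((by fun_prop : Continuous fun ε : ℝ => ((f (x + ε * u) - f x : ℝ) : ℂ) * g u).tendsto 0))
  simpa using hlim

lemma one_div_I_sub_add_one_div {u : ℝ} (hu : u ≠ 0) :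
    1 / (I - u) + 1 / (u : ℂ) = I / ((I - u) * u) := by
  have : I - u ≠ 0 := fun h => by simpa using congrArg im h
  have : (u : ℂ) ≠ 0 := ofReal_ne_zero.mpr hu
  field_simp
  ring

lemma norm_I_sub_ofReal_sq (u : ℝ) : ‖I - u‖ ^ 2 = 1 + u ^ 2 := by
  rw [← normSq_eq_norm_sq, normSq_apply]; simp; ring

lemma norm_one_div_I_sub_add_indicator_le (u : ℝ) :
    ‖1 / (I - u) + indicator {u : ℝ | 1 < |u|} (fun u : ℝ => (1 : ℂ) / u) u‖ ≤
      2 / (1 + u ^ 2) := by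
  have hsq := norm_I_sub_ofReal_sq u
  have hpos : 0 < ‖I - u‖ := by nlinarith [norm_nonneg (I - u)]
  rw [le_div_iff₀ (by positivity)]
  by_cases hu : 1 < |u|
  · have hu0 : u ≠ 0 := by rintro rfl; norm_num at hu
    rw [indicator_of_mem (show u ∈ {u : ℝ | 1 < |u|} from hu), one_div_I_sub_add_one_div hu0,
      norm_div, norm_mul, norm_I, norm_real, Real.norm_eq_abs]
    have : u ^ 2 ≤ ‖I - u‖ * |u| := by nlinarith [sq_abs u, abs_nonneg u]
    rw [div_mul_eq_mul_div, div_le_iff₀ (by positivity)]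
    nlinarith [sq_abs u]
  · rw [indicator_of_notMem (show u ∉ {u : ℝ | 1 < |u|} from hu), add_zero, norm_div, norm_one]
    have : u ^ 2 ≤ 1 := by nlinarith [sq_abs u, abs_nonneg u]
    rw [div_mul_eq_mul_div, div_le_iff₀ hpos]
    nlinarith

lemma integrable_one_div_I_sub_add_indicator :
    Integrable fun u : ℝ =>
      1 / (I - u) + indicator {u : ℝ | 1 < |u|} (fun u : ℝ => (1 : ℂ) / u) u := by
  refine (integrable_inv_one_add_sq.const_mul 2).mono' ?_ (Eventually.of_forall fun u => ?_)
  · have hind : Measurable (indicator {u : ℝ | 1 < |u|} fun u : ℝ => (1 : ℂ) / u) :=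
      (by fun_prop : Measurable fun u : ℝ => (1 : ℂ) / u).indicator
        (measurableSet_lt measurable_const measurable_abs)
    exact ((by fun_prop : Measurable fun u : ℝ => 1 / (I - u)).add hind).aestronglyMeasurable
  · simpa [div_eq_mul_inv] using norm_one_div_I_sub_add_indicator_le u

theorem integral_translate_diff_mul_g_tendsto_zero
    (f : ℝ → ℝ) (hf : Continuous f) (hsupp : HasCompactSupport f) (x : ℝ) :
    Filter.Tendsto
      (fun ε : ℝ => ∫ u : ℝ,
        ((f (x + ε * u) - f x : ℝ) : ℂ) *
          (1 / (Complex.I - u) +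
            Set.indicator {u : ℝ | 1 < |u|} (fun u : ℝ => (1 : ℂ) / u) u))
      (nhdsWithin 0 (Set.Ioi 0)) (nhds 0) := by
  obtain ⟨C, hC⟩ := hsupp.exists_bound_of_continuous hf
  exact (tendsto_integral_sub_mul_of_integrable hf hC integrable_one_div_I_sub_add_indicator x
    ).mono_left nhdsWithin_le_nhds
end

section
/- Let D ⊆ ℂ be an open simply connected set whose complement in the Riemann sphere is connected, and suppose C₁, C₂ are closed, connected, unbounded subsets of ∂D such that the connected components E₁, E₂ of ℂ∖C₁ and ℂ∖C₂ containing D satisfy E₁ ⊆ E₂. If ∂D∖C₁ ⊆ E₁, then C₂ ⊆ C₁. -/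
open Set Topology Bornology

theorem nesting_of_unbounded_boundary_components
    (D : Set ℂ) (hDopen : IsOpen D) (hDconn : IsConnected D)
    (hDscc : IsConnected ((((↑) : ℂ → OnePoint ℂ) '' D)ᶜ))
    (C₁ C₂ : Set ℂ)
    (hC₁sub : C₁ ⊆ frontier D) (hC₂sub : C₂ ⊆ frontier D)
    (hC₁closed : IsClosed C₁) (hC₂closed : IsClosed C₂)
    (hC₁conn : IsConnected C₁) (hC₂conn : IsConnected C₂)
    (hC₁unb : ¬ Bornology.IsBounded C₁) (hC₂unb : ¬ Bornology.IsBounded C₂)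
    (z : ℂ) (hz : z ∈ D)
    (E₁ E₂ : Set ℂ)
    (hE₁ : E₁ = connectedComponentIn C₁ᶜ z)
    (hE₂ : E₂ = connectedComponentIn C₂ᶜ z)
    (hDE₁ : D ⊆ E₁) (hDE₂ : D ⊆ E₂)
    (hE₁E₂ : E₁ ⊆ E₂)
    (hbd : frontier D \ C₁ ⊆ E₁) :
    C₂ ⊆ C₁ := by
  intro w hw
  by_contra hnot
  have h1 : w ∈ frontier D \ C₁ := ⟨hC₂sub hw, hnot⟩
  have h2 := hE₁E₂ (hbd h1)
  rw [hE₂] at h2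
  exact (connectedComponentIn_subset _ _ h2) hw
end

section
/- Let μ be a probability measure on ℝ with finite second moment, mean 0, and variance σ². Then iy·(iy - F_μ(iy)) → σ² as y → ∞. -/
open MeasureTheory Complex Set Filter Topology

lemma hcv_im_eq (y t : ℝ) : (Complex.I * y - t).im = y := by simp

lemma hcv_norm_lb {y : ℝ} (t : ℝ) (hy : 0 < y) : y ≤ ‖(Complex.I * y - t : ℂ)‖ := by
  have h := Complex.abs_im_le_norm (Complex.I * y - t)
  rw [hcv_im_eq, abs_of_pos hy] at h
  simpa using h

lemma hcv_den_ne {y : ℝ} (t : ℝ) (hy : 0 < y) : (Complex.I * y - t : ℂ) ≠ 0 := by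
  intro h
  have := hcv_norm_lb t hy
  rw [h] at this; simp at this; linarith

lemma hcv_cont {y : ℝ} (hy : 0 < y) :
    Continuous (fun t : ℝ => ((Complex.I * y - t : ℂ))⁻¹) := by
  apply Continuous.inv₀
  · exact continuous_const.sub Complex.continuous_ofReal
  · intro t; exact hcv_den_ne t hy

lemma hcv_helper_div (t : ℝ) : Tendsto (fun y : ℝ => |t| / y) atTop (𝓝 0) := by
  simpa using tendsto_inv_atTop_zero.const_mul |t| |>.congr
    (fun y => by rw [mul_comm, inv_mul_eq_div])

lemma hcv_ptlim (t : ℝ) :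
    Tendsto (fun y : ℝ => (Complex.I * y) / (Complex.I * y - t)) atTop (𝓝 1) := by
  have h0 : Tendsto (fun y : ℝ => (Complex.I * y) / (Complex.I * y - t) - 1) atTop (𝓝 0) := by
    refine squeeze_zero_norm' ?_ (hcv_helper_div t)
    filter_upwards [eventually_gt_atTop (0:ℝ)] with y hy
    have hne := hcv_den_ne t hy
    have heq : Complex.I * y / (Complex.I * y - t) - 1 = t / (Complex.I * y - t) := by
      field_simp
      ring
    rw [heq, norm_div]
    have h1 : ‖(t:ℂ)‖ = |t| := by simp
    rw [h1]
    exact div_le_div_of_nonneg_left (abs_nonneg t) hy (hcv_norm_lb t hy)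
  have := h0.add_const 1
  simpa using this

lemma hcv_ptlim2 (t : ℝ) :
    Tendsto (fun y : ℝ => Complex.I * y * (t:ℂ)^2 / (Complex.I * y - t)) atTop
      (𝓝 ((t:ℂ)^2)) := by
  have := (hcv_ptlim t).const_mul ((t:ℂ)^2)
  simp only [mul_one] at this
  refine this.congr fun y => by ring

theorem halfplane_capacity_eq_variance
    (μ : Measure ℝ) [IsProbabilityMeasure μ] (σ : ℝ)
    (hmom : MeasureTheory.Integrable (fun t : ℝ => t ^ 2) μ)
    (hmean : ∫ t : ℝ, t ∂μ = 0)
    (hvar : ∫ t : ℝ, t ^ 2 ∂μ = σ ^ 2) :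
    Filter.Tendsto
      (fun y : ℝ => Complex.I * y *
        (Complex.I * y - 1 / ∫ t : ℝ, 1 / (Complex.I * y - t) ∂μ))
      Filter.atTop (nhds ((σ : ℂ) ^ 2)) := by
  set G : ℝ → ℂ := fun y => ∫ t : ℝ, 1 / (Complex.I * y - t) ∂μ with hGdef
  set E : ℝ → ℂ := fun y => ∫ t : ℝ, (t:ℂ)^2 / (Complex.I * y - t) ∂μ with hEdef
  set A : ℝ → ℂ := fun y => ∫ t : ℝ, (Complex.I * y) / (Complex.I * y - t) ∂μ with hAdef
  set B : ℝ → ℂ := fun y => ∫ t : ℝ, Complex.I * y * (t:ℂ)^2 / (Complex.I * y - t) ∂μ with hBdef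
  have hintt : Integrable (fun t : ℝ => t) μ := by
    apply Integrable.mono' ((integrable_const (1:ℝ)).add hmom)
    · exact aestronglyMeasurable_id
    · filter_upwards with t
      simp only [Pi.add_apply, Real.norm_eq_abs]
      nlinarith [sq_nonneg (|t|-1), _root_.sq_abs t, abs_nonneg t]
  have hint3 : ∀ y : ℝ, 0 < y → Integrable (fun t : ℝ => (t:ℂ)^2 / (Complex.I * y - t)) μ := by
    intro y hy
    apply Integrable.mono' (hmom.div_const y)
    · exact Continuous.aestronglyMeasurable
        (((Complex.continuous_ofReal.pow 2).mul (hcv_cont hy)).congr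
          (fun t => by rw [div_eq_mul_inv]; rfl))
    · filter_upwards with t
      rw [norm_div]
      have h1 : ‖(t:ℂ)^2‖ = t^2 := by
        rw [norm_pow]; simp [_root_.sq_abs]
      rw [h1]
      exact div_le_div_of_nonneg_left (sq_nonneg t) hy (hcv_norm_lb t hy)
  -- key identity: z^2 * G y = z + E y
  have hkey : ∀ y : ℝ, 0 < y → (Complex.I * y)^2 * G y = Complex.I * y + E y := by
    intro y hy
    have h1 : (Complex.I * (y:ℂ))^2 * G y
        = ∫ t : ℝ, (Complex.I * y)^2 * (1 / (Complex.I * y - t)) ∂μ := by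
      rw [integral_const_mul]
    rw [h1]
    have h2 : ∀ t : ℝ, (Complex.I * (y:ℂ))^2 * (1 / (Complex.I * y - t))
        = (Complex.I * y + (t:ℂ)) + (t:ℂ)^2 / (Complex.I * y - t) := by
      intro t
      have hne := hcv_den_ne t hy
      field_simp
      ring
    rw [integral_congr_ae (Filter.Eventually.of_forall h2)]
    have hc : Integrable (fun _ : ℝ => Complex.I * (y:ℂ)) μ := integrable_const _
    have ht : Integrable (fun t : ℝ => (t:ℂ)) μ := hintt.ofReal
    have hsum : Integrable (fun t : ℝ => Complex.I * (y:ℂ) + (t:ℂ)) μ := hc.add ht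
    rw [integral_add hsum (hint3 y hy), integral_add hc ht]
    have h3 : ∫ t : ℝ, (t:ℂ) ∂μ = 0 := by
      rw [show (∫ t : ℝ, (t:ℂ) ∂μ) = ((∫ t : ℝ, t ∂μ : ℝ) : ℂ) from integral_ofReal,
        hmean, Complex.ofReal_zero]
    rw [h3, integral_const]
    simp [hEdef]
  have hAeq : ∀ y : ℝ, A y = Complex.I * y * G y := by
    intro y
    show (∫ t : ℝ, (Complex.I * y) / (Complex.I * y - t) ∂μ)
        = Complex.I * y * ∫ t : ℝ, 1 / (Complex.I * y - t) ∂μ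
    have h : ∀ t : ℝ, (Complex.I * (y:ℂ)) / (Complex.I * y - t)
        = (Complex.I * y) * (1 / (Complex.I * y - t)) := fun t => by ring
    rw [integral_congr_ae (Filter.Eventually.of_forall h), integral_const_mul]
  have hBeq : ∀ y : ℝ, B y = Complex.I * y * E y := by
    intro y
    show (∫ t : ℝ, Complex.I * y * (t:ℂ)^2 / (Complex.I * y - t) ∂μ)
        = Complex.I * y * ∫ t : ℝ, (t:ℂ)^2 / (Complex.I * y - t) ∂μ
    have h : ∀ t : ℝ, Complex.I * (y:ℂ) * (t:ℂ)^2 / (Complex.I * y - t)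
        = (Complex.I * y) * ((t:ℂ)^2 / (Complex.I * y - t)) := fun t => by ring
    rw [integral_congr_ae (Filter.Eventually.of_forall h), integral_const_mul]
  -- Tendsto A → 1
  have hA : Tendsto A atTop (𝓝 1) := by
    have := tendsto_integral_filter_of_dominated_convergence (μ := μ) (l := (atTop : Filter ℝ))
      (F := fun y : ℝ => fun t : ℝ => (Complex.I * y) / (Complex.I * y - t))
      (f := fun _ : ℝ => (1:ℂ)) (bound := fun _ : ℝ => (1:ℝ))
      ?_ ?_ (integrable_const 1) ?_
    · simpa using this
    · filter_upwards [eventually_gt_atTop (0:ℝ)] with y hy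
      exact Continuous.aestronglyMeasurable
        ((continuous_const.mul (hcv_cont hy)).congr (fun t => by rw [div_eq_mul_inv]; rfl))
    · filter_upwards [eventually_gt_atTop (0:ℝ)] with y hy
      filter_upwards with t
      rw [norm_div]
      have h1 : ‖Complex.I * (y:ℂ)‖ = y := by
        simp [abs_of_pos hy]
      rw [h1, div_le_one (lt_of_lt_of_le hy (hcv_norm_lb t hy))]
      exact hcv_norm_lb t hy
    · filter_upwards with t
      exact hcv_ptlim t
  -- Tendsto B → σ^2
  have hB : Tendsto B atTop (𝓝 ((σ:ℂ)^2)) := by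
    have hlim : (∫ t : ℝ, (t:ℂ)^2 ∂μ) = (σ:ℂ)^2 := by
      have h : (fun t : ℝ => (t:ℂ)^2) = fun t : ℝ => ((t^2 : ℝ) : ℂ) := by
        funext t; push_cast; ring
      rw [h, show (∫ t : ℝ, ((t^2 : ℝ) : ℂ) ∂μ) = ((∫ t : ℝ, t^2 ∂μ : ℝ) : ℂ) from
        integral_ofReal, hvar]
      push_cast; ring
    have := tendsto_integral_filter_of_dominated_convergence (μ := μ) (l := (atTop : Filter ℝ))
      (F := fun y : ℝ => fun t : ℝ => Complex.I * y * (t:ℂ)^2 / (Complex.I * y - t))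
      (f := fun t : ℝ => (t:ℂ)^2) (bound := fun t : ℝ => t^2)
      ?_ ?_ hmom ?_
    · rw [hlim] at this; exact this
    · filter_upwards [eventually_gt_atTop (0:ℝ)] with y hy
      exact Continuous.aestronglyMeasurable
        (((continuous_const.mul (Complex.continuous_ofReal.pow 2)).mul (hcv_cont hy)).congr
          (fun t => by rw [div_eq_mul_inv]; rfl))
    · filter_upwards [eventually_gt_atTop (0:ℝ)] with y hy
      filter_upwards with t
      rw [norm_div, norm_mul]
      have h1 : ‖Complex.I * (y:ℂ)‖ = y := by simp [abs_of_pos hy]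
      have h2 : ‖(t:ℂ)^2‖ = t^2 := by rw [norm_pow]; simp [_root_.sq_abs]
      rw [h1, h2, div_le_iff₀ (lt_of_lt_of_le hy (hcv_norm_lb t hy))]
      calc y * t^2 ≤ ‖(Complex.I * y - t : ℂ)‖ * t^2 := by
            exact mul_le_mul_of_nonneg_right (hcv_norm_lb t hy) (sq_nonneg t)
        _ = t^2 * ‖(Complex.I * y - t : ℂ)‖ := by ring
    · filter_upwards with t
      exact hcv_ptlim2 t
  -- conclude
  have hAne : ∀ᶠ y in atTop, A y ≠ 0 := hA.eventually_ne one_ne_zero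
  have hfinal := hB.div hA one_ne_zero
  rw [div_one] at hfinal
  refine Tendsto.congr' ?_ hfinal
  filter_upwards [hAne, eventually_gt_atTop (0:ℝ)] with y hAy hy
  have hz : (Complex.I * (y:ℂ)) ≠ 0 :=
    mul_ne_zero Complex.I_ne_zero (by exact_mod_cast hy.ne')
  have hGne : G y ≠ 0 := by
    intro h; exact hAy (by rw [hAeq, h, mul_zero])
  show B y / A y = Complex.I * y * (Complex.I * y - 1 / G y)
  rw [hAeq, hBeq, mul_div_mul_left _ _ hz]
  have hk := hkey y hy
  have hrw : Complex.I * y * (Complex.I * y - 1 / G y)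
      = ((Complex.I * y)^2 * G y - Complex.I * y) / G y := by
    field_simp
  rw [hrw, hk, add_sub_cancel_left]
end
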